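/- arXiv:1910.07888 — 3 statements merged into one kernel-verified Lean document; each statement's English description precedes it below -/
import Mathlib

section
/- Let ν > 0 and x : ℝ → ℝ^N be a solution of the B_N gradient ODE x_i' = Σ_{j≠i}(1/(x_i−x_j) + 1/(x_i+x_j)) + ν/x_i in the open chamber {x_1 > ... > x_N > 0}. Then ‖x(t)‖² = 2N(N+ν−1)t + ‖x(0)‖². -/
open Finset

/-- Elementary symmetric polynomial of degree `k` in the variables `x i`, `i ∈ s`. -/
noncomputable def esymm {N : ℕ} (s : Finset (Fin N)) (k : ℕ) (x : Fin N → ℝ) : ℝ :=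
  ∑ A ∈ s.powersetCard k, ∏ i ∈ A, x i

/-
Writing `x_i' = b_i(x)` for the drift, `d/dt ‖x‖² = ∑ᵢ 2 xᵢ bᵢ(x)`. Symmetrising the double sum
over `i ≠ j`, each unordered pair contributes `2 (xᵢ/(xᵢ-xⱼ) + xⱼ/(xⱼ-xᵢ)) +
2 (xᵢ/(xᵢ+xⱼ) + xⱼ/(xⱼ+xᵢ)) = 4` and each `i` contributes `2ν`, so the derivative is the constant
`2N(N-1) + 2Nν`. On the interval `I` the function `‖x(t)‖² - 2N(N+ν-1)t` is therefore constant.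
-/

section Drift

variable {ι : Type*} [Fintype ι] [DecidableEq ι]

noncomputable def typeBDrift (ν : ℝ) (a : ι → ℝ) (i : ι) : ℝ :=
  ∑ j ∈ univ.erase i, (1 / (a i - a j) + 1 / (a i + a j)) + ν / a i

theorem sum_sum_erase_eq_of_add_swap (f : ι → ι → ℝ) (c : ℝ)
    (hf : ∀ i j, i ≠ j → f i j + f j i = c) :
    2 * ∑ i, ∑ j ∈ univ.erase i, f i j = Fintype.card ι * (Fintype.card ι - 1) * c := by
  have hswap : ∑ i, ∑ j ∈ univ.erase i, f i j = ∑ i, ∑ j ∈ univ.erase i, f j i :=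
    sum_comm' fun i j => by simp [ne_comm]
  calc 2 * ∑ i, ∑ j ∈ univ.erase i, f i j
      = ∑ i, ∑ j ∈ univ.erase i, (f i j + f j i) := by
        rw [two_mul]
        nth_rewrite 2 [hswap]
        simp only [← sum_add_distrib]
    _ = ∑ i : ι, ∑ _j ∈ univ.erase i, c :=
        sum_congr rfl fun i _ => sum_congr rfl fun j hj => hf i j (ne_of_mem_erase hj).symm
    _ = Fintype.card ι * (Fintype.card ι - 1) * c := by
        rcases isEmpty_or_nonempty ι with hι | ⟨⟨i₀⟩⟩
        · simp
        · have hcard : 1 ≤ Fintype.card ι := Fintype.card_pos_iff.mpr ⟨i₀⟩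
          simp [card_erase_of_mem, Nat.cast_sub hcard, mul_assoc]

theorem div_sub_add_div_sub_swap {a b : ℝ} (h : a ≠ b) : a / (a - b) + b / (b - a) = 1 := by
  have : a - b ≠ 0 := sub_ne_zero.mpr h
  rw [← neg_sub a b, div_neg, ← sub_eq_add_neg, ← sub_div, div_self this]

theorem div_add_add_div_add_swap {a b : ℝ} (h : a + b ≠ 0) : a / (a + b) + b / (b + a) = 1 := by
  rw [add_comm b a, ← add_div, div_self h]

theorem sum_two_mul_mul_typeBDrift (ν : ℝ) {a : ι → ℝ} (ha : Function.Injective a)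
    (hpos : ∀ i, 0 < a i) :
    ∑ i, 2 * a i * typeBDrift ν a i
      = 2 * Fintype.card ι * (Fintype.card ι + ν - 1) := by
  let f : ι → ι → ℝ := fun i j => 2 * (a i / (a i - a j) + a i / (a i + a j))
  have hexpand : ∀ i, 2 * a i * typeBDrift ν a i = ∑ j ∈ univ.erase i, f i j + 2 * ν := by
    intro i
    rw [typeBDrift, mul_add, mul_sum]
    congr 1
    · exact sum_congr rfl fun j _ => by ring
    · field_simp [(hpos i).ne']
  have hpair : ∀ i j, i ≠ j → f i j + f j i = 4 := by
    intro i j hij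
    have hsub := div_sub_add_div_sub_swap (ha.ne hij)
    have hadd := div_add_add_div_add_swap (add_pos (hpos i) (hpos j)).ne'
    linear_combination 2 * hsub + 2 * hadd
  have hS := sum_sum_erase_eq_of_add_swap f 4 hpair
  simp only [hexpand, sum_add_distrib, sum_const, card_univ, nsmul_eq_mul]
  linarith

end Drift

theorem hasDerivAt_sum_sq {ι : Type*} [Fintype ι] {x : ℝ → ι → ℝ} {v : ι → ℝ} {t : ℝ}
    (hx : ∀ i, HasDerivAt (fun s => x s i) (v i) t) :
    HasDerivAt (fun s => ∑ i, x s i ^ 2) (∑ i, 2 * x t i * v i) t := by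
  refine HasDerivAt.fun_sum fun i _ => ?_
  simpa [mul_comm] using (hx i).fun_pow 2

theorem Convex.eq_mul_add_of_hasDerivAt_const {I : Set ℝ} (hI : Convex ℝ I) {f : ℝ → ℝ}
    {c t₀ t : ℝ} (hf : ∀ s ∈ I, HasDerivAt f c s) (ht₀ : t₀ ∈ I) (ht : t ∈ I) :
    f t = c * (t - t₀) + f t₀ := by
  have hg : ∀ s ∈ I, HasDerivWithinAt (fun s => f s - c * s) 0 I s := fun s hs => by
    simpa using ((hf s hs).fun_sub ((hasDerivAt_id s).const_mul c)).hasDerivWithinAt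
  have := hI.norm_image_sub_le_of_norm_hasDerivWithin_le (C := 0) hg (fun _ _ => by simp) ht₀ ht
  rw [zero_mul, norm_le_zero_iff, sub_eq_zero] at this
  linear_combination this

theorem stmt6_general (N : ℕ) (ν : ℝ) (I : Set ℝ) (hI : Convex ℝ I)
    (h0 : (0 : ℝ) ∈ I) (x : ℝ → Fin N → ℝ)
    (hcham : ∀ t ∈ I, (∀ i j : Fin N, i < j → x t j < x t i) ∧ ∀ i : Fin N, 0 < x t i)
    (hode : ∀ t ∈ I, ∀ i : Fin N, HasDerivAt (fun s => x s i)
      (∑ j ∈ Finset.univ.erase i,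
          (1 / (x t i - x t j) + 1 / (x t i + x t j)) + ν / x t i) t) :
    ∀ t ∈ I, ∑ i, (x t i) ^ 2
      = 2 * (N : ℝ) * ((N : ℝ) + ν - 1) * t + ∑ i, (x 0 i) ^ 2 := by
  have hderiv : ∀ t ∈ I, HasDerivAt (fun s => ∑ i, x s i ^ 2)
      (2 * (N : ℝ) * ((N : ℝ) + ν - 1)) t := by
    intro t ht
    have hanti : StrictAnti (x t) := (hcham t ht).1
    simpa [sum_two_mul_mul_typeBDrift ν hanti.injective (hcham t ht).2] using
      hasDerivAt_sum_sq (v := typeBDrift ν (x t)) (hode t ht)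
  intro t ht
  simpa using hI.eq_mul_add_of_hasDerivAt_const hderiv h0 ht

theorem stmt6 (N : ℕ) (ν : ℝ) (hν : 0 < ν) (I : Set ℝ) (hI : Convex ℝ I)
    (h0 : (0 : ℝ) ∈ I) (x : ℝ → Fin N → ℝ)
    (hcham : ∀ t ∈ I, (∀ i j : Fin N, i < j → x t j < x t i) ∧ ∀ i : Fin N, 0 < x t i)
    (hode : ∀ t ∈ I, ∀ i : Fin N, HasDerivAt (fun s => x s i)
      (∑ j ∈ Finset.univ.erase i,
          (1 / (x t i - x t j) + 1 / (x t i + x t j)) + ν / x t i) t) :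
    ∀ t ∈ I, ∑ i, (x t i) ^ 2
      = 2 * (N : ℝ) * ((N : ℝ) + ν - 1) * t + ∑ i, (x 0 i) ^ 2 :=
  stmt6_general N ν I hI h0 x hcham hode
end

section
/- Let x : I → ℝ^N solve the A_{N−1} ODE x_i' = Σ_{j≠i} 1/(x_i − x_j) with x(0) = x_0 in the open Weyl chamber. Then for each 0 ≤ k ≤ N, t ↦ e_k(x(t)) is a polynomial in t of degree at most ⌊k/2⌋; moreover for k = 2l the coefficient of t^l is (−1)^l N!/(2^l l! (N−2l)!), and for k = 2l+1 the coefficient of t^l is (−1)^l (N−1)!/(2^l l! (N−2l−1)!) · Σ_{j=1}^N x_{0,j}. -/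
/-!
Write `e_m^{(i)}` and `e_m^{(i,j)}` for `e_m` of the coordinates other than `x_i`, resp. `x_i, x_j`.
By the chain rule `(e_{k+2} ∘ x)' = ∑_i e_{k+1}^{(i)} ∑_{j ≠ i} 1 / (x_i - x_j)`. Symmetrising in
`(i, j)` and using `e_{k+1}^{(i)} - e_{k+1}^{(j)} = (x_j - x_i) e_k^{(i,j)}`, this collapses to
`-½ ∑_{i ≠ j} e_k^{(i,j)} = -((N - k)(N - k - 1) / 2) e_k`, while `e_1` is conserved. Hence
`e_{k+2}(x(t))` is a polynomial integral of `e_k(x(t))`: the degree goes up by one and the top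
coefficient is multiplied by `-(N - k)(N - k - 1) / (2 (l + 1))`. Starting from `e_0 = 1` and
`e_1 = ∑_j x_{0,j}` this produces the stated degrees and leading coefficients.
-/

open Finset

open Polynomial

section Esymm

variable {N : ℕ} (y : Fin N → ℝ)

theorem esymm_zero (s : Finset (Fin N)) : esymm s 0 y = 1 := by
  simp [esymm]

theorem esymm_one (s : Finset (Fin N)) : esymm s 1 y = ∑ i ∈ s, y i := by
  simp [esymm, powersetCard_one]

theorem esymm_insert {s : Finset (Fin N)} {j : Fin N} (hj : j ∉ s) (m : ℕ) :
    esymm (insert j s) (m + 1) y = esymm s (m + 1) y + y j * esymm s m y := by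
  have hjA : ∀ A ∈ s.powersetCard m, j ∉ A := fun A hA h => hj ((mem_powersetCard.1 hA).1 h)
  rw [esymm, powersetCard_succ_insert hj, sum_union, sum_image, esymm, esymm, mul_sum]
  · exact congrArg _ (sum_congr rfl fun A hA => prod_insert (hjA A hA))
  · intro A hA B hB hAB
    simpa [erase_insert (hjA A hA), erase_insert (hjA B hB)] using congrArg (erase · j) hAB
  · refine disjoint_left.2 fun A hA hA' => ?_
    obtain ⟨B, -, rfl⟩ := mem_image.1 hA'
    exact hj ((mem_powersetCard.1 hA).1 (mem_insert_self j B))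

theorem esymm_erase {s : Finset (Fin N)} {j : Fin N} (hj : j ∈ s) (m : ℕ) :
    esymm s (m + 1) y = esymm (s.erase j) (m + 1) y + y j * esymm (s.erase j) m y := by
  conv_lhs => rw [← insert_erase hj]
  exact esymm_insert y (notMem_erase j s) m

theorem esymm_erase_sub_esymm_erase {s : Finset (Fin N)} {i j : Fin N} (hi : i ∈ s)
    (hj : j ∈ s.erase i) (m : ℕ) :
    esymm (s.erase i) (m + 1) y - esymm (s.erase j) (m + 1) y
      = (y j - y i) * esymm ((s.erase i).erase j) m y := by
  have hij : i ∈ s.erase j := mem_erase.2 ⟨(ne_of_mem_erase hj).symm, hi⟩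
  rw [esymm_erase y hj, esymm_erase y hij, erase_right_comm]
  ring

theorem sum_esymm_erase (s : Finset (Fin N)) (m : ℕ) :
    ∑ i ∈ s, esymm (s.erase i) m y = ((#s : ℝ) - m) * esymm s m y := by
  have hswap : ∀ i B, i ∈ s ∧ B ∈ (s.erase i).powersetCard m ↔
      i ∈ s \ B ∧ B ∈ s.powersetCard m := by
    simp only [mem_powersetCard, subset_erase, mem_sdiff]
    tauto
  unfold esymm
  rw [sum_comm' hswap, mul_sum]
  refine sum_congr rfl fun B hB => ?_
  obtain ⟨hBs, hBm⟩ := mem_powersetCard.1 hB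
  rw [sum_const, nsmul_eq_mul, card_sdiff_of_subset hBs, Nat.cast_sub (card_le_card hBs), hBm]

theorem sum_sum_erase_esymm_erase_erase (s : Finset (Fin N)) (m : ℕ) :
    ∑ i ∈ s, ∑ j ∈ s.erase i, esymm ((s.erase i).erase j) m y
      = ((#s : ℝ) - 1 - m) * ((#s : ℝ) - m) * esymm s m y := by
  rw [sum_congr rfl fun i hi => (sum_esymm_erase y (s.erase i) m).trans
    (by rw [cast_card_erase_of_mem hi]), ← mul_sum, sum_esymm_erase, mul_assoc]

/-- The sets `A.erase i` with `i ∈ A ∈ s.powersetCard (m + 1)` are exactly the `m`-subsets of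
`s.erase i`. -/
theorem hasDerivAt_esymm_succ {x : ℝ → Fin N → ℝ} {v : Fin N → ℝ} {t : ℝ}
    (hx : ∀ i, HasDerivAt (fun s => x s i) (v i) t) (s : Finset (Fin N)) (m : ℕ) :
    HasDerivAt (fun u => esymm s (m + 1) (x u)) (∑ i ∈ s, esymm (s.erase i) m (x t) * v i) t := by
  have hprod := HasDerivAt.fun_sum fun A (_ : A ∈ s.powersetCard (m + 1)) =>
    HasDerivAt.fun_finsetProd (u := A) fun i _ => hx i
  have hswap : ∀ A i, A ∈ s.powersetCard (m + 1) ∧ i ∈ A ↔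
      A ∈ (s.powersetCard (m + 1)).filter (i ∈ ·) ∧ i ∈ s := by
    simp only [mem_filter, mem_powersetCard]
    exact fun A i => ⟨fun h => ⟨h, h.1.1 h.2⟩, fun h => h.1⟩
  refine hprod.congr_deriv ?_
  simp only [smul_eq_mul, esymm]
  rw [sum_comm' hswap]
  refine sum_congr rfl fun i hi => ?_
  rw [sum_mul]
  have hiB : ∀ B ∈ (s.erase i).powersetCard m, i ∉ B :=
    fun B hB => (subset_erase.1 (mem_powersetCard.1 hB).1).2
  refine sum_nbij' (erase · i) (insert i) (fun A hA => ?_) (fun B hB => ?_)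
    (fun A hA => insert_erase (mem_filter.1 hA).2) (fun B hB => erase_insert (hiB B hB))
    (fun A hA => rfl)
  · rw [mem_filter, mem_powersetCard] at hA
    refine mem_powersetCard.2 ⟨erase_subset_erase i hA.1.1, ?_⟩
    rw [card_erase_of_mem hA.2, hA.1.2, Nat.add_sub_cancel]
  · rw [mem_powersetCard, subset_erase] at hB
    refine mem_filter.2 ⟨mem_powersetCard.2 ⟨insert_subset hi hB.1.1, ?_⟩, mem_insert_self i B⟩
    rw [card_insert_of_notMem hB.1.2, hB.2]

end Esymm

theorem Finset.sum_sum_erase_comm {ι M : Type*} [DecidableEq ι] [AddCommMonoid M] (s : Finset ι)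
    (f : ι → ι → M) : ∑ i ∈ s, ∑ j ∈ s.erase i, f i j = ∑ i ∈ s, ∑ j ∈ s.erase i, f j i :=
  sum_comm' fun i j => by simp only [mem_erase]; tauto

theorem Finset.sum_sum_erase_one_div_sub {ι : Type*} [DecidableEq ι] (s : Finset ι) (y : ι → ℝ) :
    ∑ i ∈ s, ∑ j ∈ s.erase i, 1 / (y i - y j) = 0 := by
  have hanti : ∑ i ∈ s, ∑ j ∈ s.erase i, 1 / (y j - y i)
      = -∑ i ∈ s, ∑ j ∈ s.erase i, 1 / (y i - y j) := by
    simp only [← sum_neg_distrib]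
    exact sum_congr rfl fun i _ => sum_congr rfl fun j _ => by rw [← neg_sub, div_neg]
  linarith [s.sum_sum_erase_comm fun i j => 1 / (y i - y j)]

theorem sum_esymm_erase_mul_sum_one_div_sub {N : ℕ} (y : Fin N → ℝ) {s : Finset (Fin N)}
    (hy : Set.InjOn y s) (m : ℕ) :
    ∑ i ∈ s, esymm (s.erase i) (m + 1) y * ∑ j ∈ s.erase i, 1 / (y i - y j)
      = -(((#s : ℝ) - m) * ((#s : ℝ) - m - 1) / 2) * esymm s m y := by
  set a : Fin N → Fin N → ℝ := fun i j => esymm (s.erase i) (m + 1) y / (y i - y j)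
  have hpair : ∀ i ∈ s, ∀ j ∈ s.erase i, a i j + a j i = -esymm ((s.erase i).erase j) m y := by
    intro i hi j hj
    have hne : y i - y j ≠ 0 :=
      sub_ne_zero.2 fun h => ne_of_mem_erase hj (hy (mem_of_mem_erase hj) hi h.symm)
    have hji : a j i = -(esymm (s.erase j) (m + 1) y / (y i - y j)) := by
      rw [← div_neg, neg_sub]
    rw [hji, ← sub_eq_add_neg, ← sub_div, esymm_erase_sub_esymm_erase y hi hj m,
      ← neg_sub (y i) (y j), neg_mul, neg_div, mul_div_cancel_left₀ _ hne]
  have hsym : 2 * ∑ i ∈ s, ∑ j ∈ s.erase i, a i j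
      = -(((#s : ℝ) - 1 - m) * ((#s : ℝ) - m) * esymm s m y) := by
    calc 2 * ∑ i ∈ s, ∑ j ∈ s.erase i, a i j
        = ∑ i ∈ s, ∑ j ∈ s.erase i, (a i j + a j i) := by
          rw [two_mul]
          nth_rw 2 [sum_sum_erase_comm]
          simp only [← sum_add_distrib]
      _ = -∑ i ∈ s, ∑ j ∈ s.erase i, esymm ((s.erase i).erase j) m y := by
          simp only [← sum_neg_distrib]
          exact sum_congr rfl fun i hi => sum_congr rfl (hpair i hi)
      _ = _ := by rw [sum_sum_erase_esymm_erase_erase]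
  have hLHS : ∑ i ∈ s, esymm (s.erase i) (m + 1) y * ∑ j ∈ s.erase i, 1 / (y i - y j)
      = ∑ i ∈ s, ∑ j ∈ s.erase i, a i j := by
    simp only [a, mul_sum, mul_one_div]
  rw [hLHS]
  linear_combination hsym / 2

namespace Polynomial

variable {K : Type*} [Field K]

noncomputable def antideriv (p : K[X]) : K[X] :=
  ∑ n ∈ range (p.natDegree + 1), monomial (n + 1) (p.coeff n / (n + 1))

theorem coeff_antideriv_zero (p : K[X]) : p.antideriv.coeff 0 = 0 := by
  simp [antideriv, coeff_monomial]

theorem coeff_antideriv_succ (p : K[X]) (n : ℕ) :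
    p.antideriv.coeff (n + 1) = p.coeff n / (n + 1) := by
  simp only [antideriv, finsetSum_coeff, coeff_monomial, add_left_inj, sum_ite_eq', mem_range]
  split_ifs with hn
  · rfl
  · rw [coeff_eq_zero_of_natDegree_lt (by omega), zero_div]

theorem derivative_antideriv [CharZero K] (p : K[X]) : derivative p.antideriv = p := by
  ext n
  rw [coeff_derivative, coeff_antideriv_succ]
  field_simp

theorem natDegree_antideriv_le (p : K[X]) : p.antideriv.natDegree ≤ p.natDegree + 1 :=
  natDegree_sum_le_of_forall_le _ _ fun n hn =>
    (natDegree_monomial_le _).trans (by simpa [Nat.lt_succ_iff] using hn)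

end Polynomial

theorem Convex.eqOn_of_hasDerivAt_eq {E : Type*} [NormedAddCommGroup E] [NormedSpace ℝ E]
    {s : Set ℝ} (hs : Convex ℝ s) {f g f' : ℝ → E} (hf : ∀ t ∈ s, HasDerivAt f (f' t) t)
    (hg : ∀ t ∈ s, HasDerivAt g (f' t) t) {a : ℝ} (ha : a ∈ s) (hfga : f a = g a) :
    Set.EqOn f g s := fun b hb => by
  have h := hs.norm_image_sub_le_of_norm_hasDerivWithin_le (f := f - g) (C := 0)
    (fun t ht => by simpa using ((hf t ht).sub (hg t ht)).hasDerivWithinAt)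
    (fun _ _ => norm_zero.le) ha hb
  rwa [zero_mul, norm_le_zero_iff, Pi.sub_apply, Pi.sub_apply, hfga, sub_self, sub_zero,
    sub_eq_zero] at h

/-- `M! / (2 ^ l l! (M - 2l)!)` counts the `l`-edge matchings of the complete graph on `M`
vertices. -/
noncomputable def signedMatchingNumber (M l : ℕ) : ℝ :=
  (-1 : ℝ) ^ l * (Nat.factorial M : ℝ)
    / (2 ^ l * (Nat.factorial l : ℝ) * (Nat.factorial (M - 2 * l) : ℝ))

theorem signedMatchingNumber_zero (M : ℕ) : signedMatchingNumber M 0 = 1 := by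
  simp [signedMatchingNumber, Nat.factorial_ne_zero]

theorem signedMatchingNumber_succ {M l : ℕ} (h : 2 * l + 2 ≤ M) :
    signedMatchingNumber M (l + 1)
      = -(((M : ℝ) - 2 * l) * ((M : ℝ) - 2 * l - 1) / 2) * signedMatchingNumber M l / (l + 1) := by
  obtain ⟨a, rfl⟩ : ∃ a, M = a + 2 * l + 2 := ⟨M - (2 * l + 2), by omega⟩
  rw [signedMatchingNumber, signedMatchingNumber, show a + 2 * l + 2 - 2 * l = a + 1 + 1 by omega,
    show a + 2 * l + 2 - 2 * (l + 1) = a by omega, Nat.factorial_succ (a + 1),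
    Nat.factorial_succ a, Nat.factorial_succ l]
  have : (Nat.factorial a : ℝ) ≠ 0 := Nat.cast_ne_zero.2 (Nat.factorial_ne_zero a)
  have : (Nat.factorial l : ℝ) ≠ 0 := Nat.cast_ne_zero.2 (Nat.factorial_ne_zero l)
  push_cast
  field_simp
  ring

/-- Integrates `e_{k+2}' = -((N - k)(N - k - 1) / 2) e_k`, `e_1' = 0` from the initial values
`e_k(x0)`. -/
noncomputable def esymmFlowPoly (N : ℕ) (x0 : Fin N → ℝ) : ℕ → ℝ[X]
  | 0 => 1
  | 1 => C (esymm univ 1 x0)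
  | k + 2 => C (esymm univ (k + 2) x0)
      - C (((N : ℝ) - k) * ((N : ℝ) - k - 1) / 2) * (esymmFlowPoly N x0 k).antideriv

section esymmFlowPoly

variable (N : ℕ) (x0 : Fin N → ℝ)

theorem natDegree_esymmFlowPoly_le : ∀ k, (esymmFlowPoly N x0 k).natDegree ≤ k / 2
  | 0 => by simp [esymmFlowPoly]
  | 1 => by simp [esymmFlowPoly]
  | k + 2 => by
    refine (natDegree_sub_le _ _).trans (max_le (by simp) ?_)
    refine (natDegree_C_mul_le _ _).trans ((natDegree_antideriv_le _).trans ?_)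
    have := natDegree_esymmFlowPoly_le k
    omega

theorem eval_zero_esymmFlowPoly : ∀ k, (esymmFlowPoly N x0 k).eval 0 = esymm univ k x0
  | 0 => by simp [esymmFlowPoly, esymm_zero]
  | 1 => by simp [esymmFlowPoly]
  | k + 2 => by simp [esymmFlowPoly, ← coeff_zero_eq_eval_zero, coeff_antideriv_zero]

theorem derivative_esymmFlowPoly_add_two (k : ℕ) :
    derivative (esymmFlowPoly N x0 (k + 2))
      = -C (((N : ℝ) - k) * ((N : ℝ) - k - 1) / 2) * esymmFlowPoly N x0 k := by
  simp [esymmFlowPoly, derivative_antideriv]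

theorem coeff_esymmFlowPoly_add_two_succ (k l : ℕ) :
    (esymmFlowPoly N x0 (k + 2)).coeff (l + 1)
      = -(((N : ℝ) - k) * ((N : ℝ) - k - 1) / 2) * (esymmFlowPoly N x0 k).coeff l / (l + 1) := by
  rw [esymmFlowPoly, coeff_sub, coeff_C_succ, coeff_C_mul, coeff_antideriv_succ]
  ring

theorem coeff_esymmFlowPoly_two_mul : ∀ {l : ℕ}, 2 * l ≤ N →
    (esymmFlowPoly N x0 (2 * l)).coeff l = signedMatchingNumber N l
  | 0, _ => by simp [esymmFlowPoly, signedMatchingNumber_zero]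
  | l + 1, h => by
    rw [show 2 * (l + 1) = 2 * l + 2 by ring, coeff_esymmFlowPoly_add_two_succ,
      coeff_esymmFlowPoly_two_mul (by omega), signedMatchingNumber_succ h]
    push_cast
    ring

theorem coeff_esymmFlowPoly_two_mul_add_one : ∀ {l : ℕ}, 2 * l + 1 ≤ N →
    (esymmFlowPoly N x0 (2 * l + 1)).coeff l = signedMatchingNumber (N - 1) l * ∑ j, x0 j
  | 0, _ => by simp [esymmFlowPoly, signedMatchingNumber_zero, esymm_one]
  | l + 1, h => by
    rw [show 2 * (l + 1) + 1 = 2 * l + 1 + 2 by ring, coeff_esymmFlowPoly_add_two_succ,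
      coeff_esymmFlowPoly_two_mul_add_one (by omega), signedMatchingNumber_succ (by omega)]
    push_cast [Nat.cast_sub (by omega : 1 ≤ N)]
    ring

end esymmFlowPoly

section CalogeroMoserFlow

variable {N : ℕ} {x : ℝ → Fin N → ℝ} {t : ℝ}

theorem hasDerivAt_esymm_one_of_flow
    (hode : ∀ i, HasDerivAt (fun s => x s i) (∑ j ∈ univ.erase i, 1 / (x t i - x t j)) t) :
    HasDerivAt (fun s => esymm univ 1 (x s)) 0 t := by
  simpa only [esymm_zero, one_mul, sum_sum_erase_one_div_sub]
    using hasDerivAt_esymm_succ hode univ 0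

theorem hasDerivAt_esymm_add_two_of_flow (hinj : Function.Injective (x t))
    (hode : ∀ i, HasDerivAt (fun s => x s i) (∑ j ∈ univ.erase i, 1 / (x t i - x t j)) t)
    (k : ℕ) :
    HasDerivAt (fun s => esymm univ (k + 2) (x s))
      (-(((N : ℝ) - k) * ((N : ℝ) - k - 1) / 2) * esymm univ k (x t)) t := by
  have h := hasDerivAt_esymm_succ hode univ (k + 1)
  rwa [sum_esymm_erase_mul_sum_one_div_sub (x t) hinj.injOn, card_univ, Fintype.card_fin] at h

theorem esymm_eq_eval_esymmFlowPoly {I : Set ℝ} (hI : Convex ℝ I) (h0 : (0 : ℝ) ∈ I)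
    (hinj : ∀ t ∈ I, Function.Injective (x t))
    (hode : ∀ t ∈ I, ∀ i, HasDerivAt (fun s => x s i) (∑ j ∈ univ.erase i, 1 / (x t i - x t j)) t) :
    ∀ k, Set.EqOn (fun t => esymm univ k (x t)) (esymmFlowPoly N (x 0) k).eval I
  | 0 => fun t _ => by simp [esymmFlowPoly, esymm_zero]
  | 1 => hI.eqOn_of_hasDerivAt_eq (fun t ht => hasDerivAt_esymm_one_of_flow (hode t ht))
      (fun t _ => by simpa [esymmFlowPoly] using hasDerivAt_const t (esymm univ 1 (x 0))) h0
      (eval_zero_esymmFlowPoly N (x 0) 1).symm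
  | k + 2 => by
    refine hI.eqOn_of_hasDerivAt_eq
      (f' := fun t => -(((N : ℝ) - k) * ((N : ℝ) - k - 1) / 2) * (esymmFlowPoly N (x 0) k).eval t)
      (fun t ht => ?_) (fun t _ => ?_) h0
      (eval_zero_esymmFlowPoly N (x 0) (k + 2)).symm
    · have := hasDerivAt_esymm_add_two_of_flow (hinj t ht) (hode t ht) k
      rwa [show esymm univ k (x t) = _ from esymm_eq_eval_esymmFlowPoly hI h0 hinj hode k ht]
        at this
    · simpa [derivative_esymmFlowPoly_add_two] using (esymmFlowPoly N (x 0) (k + 2)).hasDerivAt t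

end CalogeroMoserFlow

theorem stmt9 (N : ℕ) (I : Set ℝ) (hI : Convex ℝ I) (h0 : (0 : ℝ) ∈ I)
    (x : ℝ → Fin N → ℝ) (x0 : Fin N → ℝ) (hx0 : x 0 = x0)
    (hcham : ∀ t ∈ I, ∀ i j : Fin N, i < j → x t j < x t i)
    (hode : ∀ t ∈ I, ∀ i : Fin N, HasDerivAt (fun s => x s i)
      (∑ j ∈ Finset.univ.erase i, 1 / (x t i - x t j)) t) :
    ∀ k : ℕ, k ≤ N → ∃ p : Polynomial ℝ,
      p.natDegree ≤ k / 2 ∧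
      (∀ t ∈ I, esymm Finset.univ k (x t) = p.eval t) ∧
      (∀ l : ℕ, k = 2 * l →
        p.coeff l = (-1 : ℝ) ^ l * (Nat.factorial N : ℝ)
          / (2 ^ l * (Nat.factorial l : ℝ) * (Nat.factorial (N - 2 * l) : ℝ))) ∧
      (∀ l : ℕ, k = 2 * l + 1 →
        p.coeff l = (-1 : ℝ) ^ l * (Nat.factorial (N - 1) : ℝ)
          / (2 ^ l * (Nat.factorial l : ℝ) * (Nat.factorial (N - 2 * l - 1) : ℝ))
          * ∑ j, x0 j) := by
  subst hx0
  intro k hk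
  have hinj : ∀ t ∈ I, Function.Injective (x t) := fun t ht =>
    StrictAnti.injective fun i j => hcham t ht i j
  refine ⟨esymmFlowPoly N (x 0) k, natDegree_esymmFlowPoly_le N (x 0) k,
    fun t ht => esymm_eq_eval_esymmFlowPoly hI h0 hinj hode k ht, ?_, ?_⟩
  · rintro l rfl
    exact coeff_esymmFlowPoly_two_mul N (x 0) hk
  · rintro l rfl
    rw [coeff_esymmFlowPoly_two_mul_add_one N (x 0) hk, Nat.sub_right_comm]
    rfl
end

section
/- Let x : I → ℝ^N solve the D_N ODE x_i' = Σ_{j≠i}(1/(x_i−x_j)+1/(x_i+x_j)) on the open D_N chamber {x_1 > ... > x_{N-1} > |x_N|}. Then the product ∏_{i=1}^N x_i(t)² is constant in t; equivalently d/dt ẽ_N(x(t)) = 0 where ẽ_N(x) = x_1²···x_N². -/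
/-! Writing `P = ∏ xᵢ²`, the chain rule and `2xᵢ (1/(xᵢ-xⱼ) + 1/(xᵢ+xⱼ)) = 4xᵢ²/(xᵢ²-xⱼ²)` give
`P' = ∑_{i≠j} 4P/(xᵢ²-xⱼ²)`. The summand is antisymmetric in `(i, j)`, so the sum vanishes.
No division by `xᵢ` occurs, which matters because `x_N` may vanish on the chamber. -/

open Finset

theorem Finset.sum_sum_erase_eq_zero_of_antisymm {ι M : Type*} [DecidableEq ι] [AddCommMonoid M]
    (s : Finset ι) (f : ι → ι → M) (hf : ∀ i j, i ≠ j → f i j + f j i = 0) :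
    ∑ i ∈ s, ∑ j ∈ s.erase i, f i j = 0 := by
  rw [← sum_finset_product' s.offDiag s (fun i => s.erase i) (by simp [and_comm, ne_comm])]
  refine sum_involution (fun p _ => p.swap) (fun p hp => hf p.1 p.2 (mem_offDiag.1 hp).2.2)
    (fun p hp _ h => (mem_offDiag.1 hp).2.2 (congrArg Prod.snd h))
    (fun p hp => ?_) (fun p _ => rfl)
  obtain ⟨h₁, h₂, h₃⟩ := mem_offDiag.1 hp
  exact mem_offDiag.2 ⟨h₂, h₁, h₃.symm⟩

theorem mul_one_div_sub_add_one_div_add {K : Type*} [Field K] {a b : K} (h : a ^ 2 ≠ b ^ 2) :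
    a * (1 / (a - b) + 1 / (a + b)) = 2 * a ^ 2 / (a ^ 2 - b ^ 2) := by
  have hsub : a - b ≠ 0 := fun h' => h (by linear_combination (a + b) * h')
  have hadd : a + b ≠ 0 := fun h' => h (by linear_combination (a - b) * h')
  field_simp
  ring

/-- The right-hand side of the `D_N` flow `xᵢ' = driftD x i`. -/
noncomputable def driftD {ι K : Type*} [Fintype ι] [DecidableEq ι] [Field K] (a : ι → K)
    (i : ι) : K :=
  ∑ j ∈ univ.erase i, (1 / (a i - a j) + 1 / (a i + a j))

theorem prod_erase_sq_mul_two_mul_driftD {ι K : Type*} [Fintype ι] [DecidableEq ι] [Field K]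
    {a : ι → K} (ha : Function.Injective fun i => a i ^ 2) (i : ι) :
    (∏ j ∈ univ.erase i, a j ^ 2) * (2 * a i * driftD a i) =
      ∑ j ∈ univ.erase i, 4 * (∏ k, a k ^ 2) / (a i ^ 2 - a j ^ 2) := by
  rw [driftD, mul_sum, mul_sum]
  refine sum_congr rfl fun j hj => ?_
  have hij : a i ^ 2 ≠ a j ^ 2 := ha.ne (ne_of_mem_erase hj).symm
  rw [← mul_prod_erase univ (fun k => a k ^ 2) (mem_univ i), mul_assoc 2,
    mul_one_div_sub_add_one_div_add hij]
  ring

theorem sum_prod_erase_sq_mul_two_mul_driftD {ι K : Type*} [Fintype ι] [DecidableEq ι] [Field K]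
    {a : ι → K} (ha : Function.Injective fun i => a i ^ 2) :
    ∑ i, (∏ j ∈ univ.erase i, a j ^ 2) * (2 * a i * driftD a i) = 0 := by
  simp only [prod_erase_sq_mul_two_mul_driftD ha]
  refine sum_sum_erase_eq_zero_of_antisymm _ _ fun i j _ => ?_
  rw [← neg_sub (a i ^ 2), div_neg, add_neg_cancel]

theorem stmt19 (N : ℕ) (I : Set ℝ) (x : ℝ → Fin N → ℝ)
    (hcham : ∀ t ∈ I, ∀ i j : Fin N, i < j → |x t j| < x t i)
    (hode : ∀ t ∈ I, ∀ i : Fin N, HasDerivAt (fun s => x s i)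
      (∑ j ∈ Finset.univ.erase i, (1 / (x t i - x t j) + 1 / (x t i + x t j))) t) :
    ∀ t ∈ I, HasDerivAt (fun s => ∏ i, (x s i) ^ 2) (0 : ℝ) t := by
  intro t ht
  have hsq : StrictAnti fun i => x t i ^ 2 := fun i j hij =>
    sq_lt_sq.2 ((hcham t ht i j hij).trans_le (le_abs_self _))
  refine (HasDerivAt.fun_finsetProd fun i _ => (hode t ht i).pow 2).congr_deriv ?_
  simp only [smul_eq_mul, Nat.cast_ofNat, Nat.add_one_sub_one, pow_one]
  exact sum_prod_erase_sq_mul_two_mul_driftD hsq.injective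
end
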